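/- arXiv:1606.01029 — 2 statements merged into one kernel-verified Lean document; each statement's English description precedes it below -/
import Mathlib

section
/- Let k be an algebraically closed field of characteristic p > 0, let K = Frac(W(k)) be the fraction field of the Witt vectors, and let φ be the Frobenius automorphism of K. Then every one-dimensional isocrystal (V, φ_V) over k (i.e., a one-dimensional K-vector space with a φ-semilinear bijection φ_V) is isomorphic to the standard isocrystal of slope m for a unique integer m, where the standard isocrystal of slope m is K with Frobenius p^m · φ. -/
/-!
Existence is Mathlib's `WittVector.isocrystal_classification`. For uniqueness, note that every
ring automorphism of a discrete valuation ring maps a uniformizer to a uniformizer, so its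
extension to the fraction field preserves the valuation; in particular the `p`-adic valuation of
`K(p, k)` is `φ`-invariant. An isomorphism between the standard isocrystals of slopes `m` and
`m'` sends `1` to some `c ≠ 0` with `p ^ m' * φ c = p ^ m * c`, and taking valuations gives
`m = m'`.
-/

open scoped Isocrystal

open IsDedekindDomain HeightOneSpectrum

theorem IsDedekindDomain.HeightOneSpectrum.intValuation_eq_of_associated {R : Type*} [CommRing R]
    [IsDedekindDomain R] (v : HeightOneSpectrum R) {a b : R} (h : Associated a b) :
    v.intValuation a = v.intValuation b := by
  obtain ⟨u, rfl⟩ := h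
  rw [map_mul, intValuation_eq_one_iff.mpr (@Ideal.notMem_of_isUnit _ _ _ v.isPrime _ u.isUnit),
    mul_one]

namespace IsDiscreteValuationRing

variable {A : Type*} [CommRing A] [IsDomain A] [IsDiscreteValuationRing A]

theorem associated_ringEquiv_apply (σ : A ≃+* A) (a : A) : Associated (σ a) a := by
  rcases eq_or_ne a 0 with rfl | ha
  · simp
  obtain ⟨ϖ, hϖ⟩ := exists_irreducible A
  obtain ⟨n, u, rfl⟩ := eq_unit_mul_pow_irreducible ha hϖ
  have hσϖ : Irreducible (σ ϖ) := (MulEquiv.irreducible_iff (σ : A ≃* A)).mpr hϖ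
  rw [map_mul, map_pow]
  exact ((associated_isUnit_mul_left_iff (u.isUnit.map σ)).mpr
    (associated_of_irreducible A hσϖ hϖ).pow_pow).trans
    (associated_unit_mul_left _ _ u.isUnit).symm

variable {K : Type*} [Field K] [Algebra A K] [IsFractionRing A K]

theorem valuation_ringEquivOfRingEquiv (σ : A ≃+* A) (x : K) :
    (maximalIdeal A).valuation K (IsFractionRing.ringEquivOfRingEquiv σ x) =
      (maximalIdeal A).valuation K x := by
  obtain ⟨a, b, -, rfl⟩ := IsFractionRing.div_surjective (A := A) x
  simp only [map_div₀, IsFractionRing.ringEquivOfRingEquiv_algebraMap, valuation_of_algebraMap,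
    intValuation_eq_of_associated _ (associated_ringEquiv_apply σ _)]

end IsDiscreteValuationRing

namespace WittVector

section Equiv

variable {p : ℕ} [Fact p.Prime] {k : Type*} [CommRing k] [IsDomain k] [CharP k p] [PerfectRing k p]
  {V V₂ V₃ : Type*} [AddCommGroup V] [Isocrystal p k V] [AddCommGroup V₂] [Isocrystal p k V₂]
  [AddCommGroup V₃] [Isocrystal p k V₃]

noncomputable def IsocrystalEquiv.symm (e : V ≃ᶠⁱ[p, k] V₂) : V₂ ≃ᶠⁱ[p, k] V where
  toLinearEquiv := e.toLinearEquiv.symm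
  frob_equivariant x := e.toLinearEquiv.injective <| by
    rw [← e.frob_equivariant, LinearEquiv.apply_symm_apply, LinearEquiv.apply_symm_apply]

noncomputable def IsocrystalEquiv.trans (e : V ≃ᶠⁱ[p, k] V₂) (e' : V₂ ≃ᶠⁱ[p, k] V₃) :
    V ≃ᶠⁱ[p, k] V₃ where
  toLinearEquiv := e.toLinearEquiv.trans e'.toLinearEquiv
  frob_equivariant x := by
    simp only [LinearEquiv.trans_apply, e'.frob_equivariant, e.frob_equivariant]

end Equiv

variable (p : ℕ) [Fact p.Prime] (k : Type*) [Field k] [CharP k p] [PerfectRing k p]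

namespace FractionRing

open scoped WithZero in
noncomputable abbrev valuation : Valuation K(p, k) ℤᵐ⁰ :=
  (IsDiscreteValuationRing.maximalIdeal (WittVector p k)).valuation K(p, k)

theorem valuation_frobenius (x : K(p, k)) : valuation p k (φ(p, k) x) = valuation p k x :=
  IsDiscreteValuationRing.valuation_ringEquivOfRingEquiv _ x

theorem valuation_p : valuation p k (p : K(p, k)) = WithZero.exp (-1) := by
  rw [← map_natCast (algebraMap (WittVector p k) K(p, k)), valuation_of_algebraMap]
  exact intValuation_singleton _ (WittVector.p_nonzero p k)
    ((IsDiscreteValuationRing.irreducible_iff_uniformizer _).mp (irreducible p))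

theorem eq_of_zpow_mul_frobenius_eq {m m' : ℤ} {c : K(p, k)} (hc : c ≠ 0)
    (h : (p : K(p, k)) ^ m * φ(p, k) c = (p : K(p, k)) ^ m' * c) : m = m' := by
  have hv := congrArg (valuation p k) h
  rw [map_mul, map_mul, map_zpow₀, map_zpow₀, valuation_frobenius, valuation_p,
    mul_left_inj' ((Valuation.ne_zero_iff _).mpr hc)] at hv
  exact zpow_right_injective₀ (by simp) (by simp) hv

end FractionRing

theorem StandardOneDimIsocrystal.eq_of_isocrystalEquiv {m m' : ℤ}
    (e : StandardOneDimIsocrystal p k m ≃ᶠⁱ[p, k] StandardOneDimIsocrystal p k m') : m = m' := by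
  let x₀ : StandardOneDimIsocrystal p k m := (1 : K(p, k))
  let c : K(p, k) := e.toLinearEquiv x₀
  have hc : c ≠ 0 := (LinearEquiv.map_ne_zero_iff _).mpr (one_ne_zero (α := K(p, k)))
  have hx₀ : φ(p, k) x₀ = 1 := map_one _
  have h := e.frob_equivariant x₀
  simp only [StandardOneDimIsocrystal.frobenius_apply, hx₀] at h
  have key : (p : K(p, k)) ^ m' * φ(p, k) c = (p : K(p, k)) ^ m * c :=
    h.trans (e.toLinearEquiv.map_smul _ x₀)
  exact (FractionRing.eq_of_zpow_mul_frobenius_eq p k hc key).symm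

end WittVector

/-- **Classification of one-dimensional isocrystals.**
Let `k` be an algebraically closed field of characteristic `p > 0`, `K(p, k)` the fraction
field of its Witt vectors, with Frobenius automorphism `φ(p, k)`.  Every one-dimensional
isocrystal `V` over `k` is isomorphic to the standard one-dimensional isocrystal of slope `m`
(namely `K(p, k)` with Frobenius `p ^ m • φ(p, k)`) for a *unique* integer `m`. -/
theorem one_dimensional_isocrystal_classification_unique
    (p : ℕ) [Fact p.Prime] (k : Type*) [Field k] [IsAlgClosed k] [CharP k p]
    (V : Type*) [AddCommGroup V] [WittVector.Isocrystal p k V]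
    (h_dim : Module.finrank K(p, k) V = 1) :
    ∃! m : ℤ, Nonempty (WittVector.StandardOneDimIsocrystal p k m ≃ᶠⁱ[p, k] V) := by
  obtain ⟨m, ⟨e⟩⟩ := WittVector.isocrystal_classification p k V h_dim
  exact ⟨m, ⟨e⟩, fun m' ⟨e'⟩ =>
    WittVector.StandardOneDimIsocrystal.eq_of_isocrystalEquiv p k (e'.trans e.symm)⟩
end

section
/- Let A be a group acting by automorphisms on a Dedekind domain R with fraction field K, let M be a finitely generated R-module with a compatible semilinear A-action. If the action of A on the set of maximal ideals of R has no finite orbit, then the torsion submodule of M is zero; i.e., M is projective. -/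
/-!
If the torsion submodule `T` of `M` were nonzero, its annihilator `J` would be a nonzero
(`T` is finitely generated, being a submodule of a finitely generated module over a noetherian
ring) proper ideal. Each `ρ a` is a `φ a`-semilinear bijection of `M`, so it maps `T` onto `T`
and `J` is `A`-stable. A maximal ideal `I ⊇ J` then has its whole orbit among the finitely many
maximal ideals containing `J`. Hence `T = 0`, and a torsion-free module over a Dedekind domain
is flat, so projective when finitely presented.
-/

open Submodule

section Semilinear

variable {R R₂ M M₂ : Type*} [CommRing R] [CommRing R₂] [AddCommGroup M] [AddCommGroup M₂]
  [Module R M] [Module R₂ M₂]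

def AddEquiv.toSemilinearEquiv {σ : R →+* R₂} {σ' : R₂ →+* R} [RingHomInvPair σ σ']
    [RingHomInvPair σ' σ] (e : M ≃+ M₂) (he : ∀ (r : R) (m : M), e (r • m) = σ r • e m) :
    M ≃ₛₗ[σ] M₂ :=
  { e with map_smul' := he }

theorem Submodule.le_comap_torsion [Nontrivial R] [NoZeroDivisors R₂] {σ : R →+* R₂}
    (hσ : Function.Injective σ) (f : M →ₛₗ[σ] M₂) :
    torsion R M ≤ (torsion R₂ M₂).comap f := by
  rintro m ⟨s, hs⟩
  exact ⟨⟨σ s, map_mem_nonZeroDivisors σ hσ s.2⟩, by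
    rw [Submonoid.smul_def, ← LinearMap.map_smulₛₗ, ← Submonoid.smul_def, hs, map_zero]⟩

theorem Submodule.map_mem_annihilator_torsion [IsDomain R] {σ σ' : R →+* R}
    [RingHomInvPair σ σ'] [RingHomInvPair σ' σ] (e : M ≃ₛₗ[σ] M) {x : R}
    (hx : x ∈ (torsion R M).annihilator) : σ x ∈ (torsion R M).annihilator := by
  refine mem_annihilator.mpr fun n hn ↦ ?_
  have hσ' : Function.Injective σ' :=
    Function.LeftInverse.injective (g := σ) fun _ ↦ RingHomInvPair.comp_apply_eq₂
  have hn' : e.symm n ∈ torsion R M := le_comap_torsion hσ' e.symm.toLinearMap hn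
  rw [← e.apply_symm_apply n, ← LinearEquiv.map_smulₛₗ, mem_annihilator.mp hx _ hn', map_zero]

end Semilinear

theorem Submodule.annihilator_torsion_ne_bot {R M : Type*} [CommRing R] [IsDomain R]
    [IsNoetherianRing R] [AddCommGroup M] [Module R M] [Module.Finite R M] :
    (torsion R M).annihilator ≠ ⊥ := by
  have : Module.Finite R (torsion R M) := Module.Finite.iff_fg.mpr (IsNoetherian.noetherian _)
  obtain ⟨r, hr, hr0⟩ :=
    annihilator_top_inter_nonZeroDivisors (torsion_isTorsion (R := R) (M := M))
  rw [annihilator_top] at hr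
  exact (Submodule.ne_bot_iff _).mpr ⟨r, hr, nonZeroDivisors.ne_zero hr0⟩

theorem Ideal.finite_setOf_le {R : Type*} [CommRing R] [IsDedekindDomain R] {J : Ideal R}
    (hJ : J ≠ ⊥) : {P : Ideal R | J ≤ P}.Finite := by
  have := UniqueFactorizationMonoid.fintypeSubtypeDvd J hJ
  exact (Set.finite_coe_iff.mp (Finite.of_fintype {P // P ∣ J})).subset
    fun _ ↦ Ideal.dvd_iff_le.mpr

theorem exists_isMaximal_finite_orbit {A R : Type*} [Group A] [CommRing R] [IsDedekindDomain R]
    (φ : A →* RingAut R) {J : Ideal R} (hJ0 : J ≠ ⊥) (hJ : J ≠ ⊤)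
    (hstable : ∀ a, ∀ x ∈ J, φ a x ∈ J) :
    ∃ I : Ideal R, I.IsMaximal ∧ {K : Ideal R | ∃ a : A, K = I.map (φ a : R →+* R)}.Finite := by
  obtain ⟨I, hI, hJI⟩ := J.exists_le_maximal hJ
  refine ⟨I, hI, (Ideal.finite_setOf_le hJ0).subset ?_⟩
  rintro _ ⟨a, rfl⟩ x hx
  have hx' : φ a (φ a⁻¹ x) = x := by
    rw [← RingAut.mul_apply, ← map_mul, mul_inv_cancel, map_one, RingAut.one_apply]
  exact hx' ▸ Ideal.mem_map_of_mem _ (hJI (hstable a⁻¹ x hx))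

theorem torsion_eq_bot_of_no_finite_orbit_general
    {A R : Type*} [Group A] [CommRing R] [IsDedekindDomain R]
    (φ : A →* RingAut R)
    {M : Type*} [AddCommGroup M] [Module R M] [Module.Finite R M]
    (ρ : A →* Multiplicative (AddAut M))
    (hsemilinear : ∀ (a : A) (r : R) (m : M), Multiplicative.toAdd (ρ a) (r • m) = (φ a r) • (Multiplicative.toAdd (ρ a) m))
    (horbit : ∀ I : Ideal R, I.IsMaximal →
      {J : Ideal R | ∃ a : A, J = I.map (φ a : R →+* R)}.Infinite) :
    Submodule.torsion R M = ⊥ ∧ Module.Projective R M := by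
  have hT : torsion R M = ⊥ := by
    by_contra hT
    have hstable (a : A) (x : R) (hx : x ∈ (torsion R M).annihilator) :
        φ a x ∈ (torsion R M).annihilator := by
      have := RingHomInvPair.of_ringEquiv (φ a)
      have := RingHomInvPair.of_ringEquiv_symm (φ a)
      exact map_mem_annihilator_torsion
        ((Multiplicative.toAdd (ρ a)).toSemilinearEquiv (σ := (φ a : R →+* R)) (hsemilinear a)) hx
    obtain ⟨I, hI, hfin⟩ := exists_isMaximal_finite_orbit φ annihilator_torsion_ne_bot
      (annihilator_eq_top_iff.not.mpr hT) hstable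
    exact horbit I hI hfin
  have : Module.Flat R M := IsDedekindDomain.flat_iff_torsion_eq_bot.mpr hT
  have := Module.finitePresentation_of_finite R M
  exact ⟨hT, Module.Flat.projective_of_finitePresentation⟩

/-- **Torsion vanishes under a semilinear action with no finite orbit on maximal ideals.**
Let a group `A` act by ring automorphisms `φ` on a Dedekind domain `R`, and let `M` be a
finitely generated `R`-module with a compatible semilinear `A`-action `ρ`
(`ρ a (r • m) = φ a r • ρ a m`).  If the induced action of `A` on the set of maximal ideals
of `R` has no finite orbit, then the torsion submodule of `M` is zero; i.e., `M` is
projective. -/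
theorem torsion_eq_bot_of_no_finite_orbit
    {A R : Type*} [Group A] [CommRing R] [IsDomain R] [IsDedekindDomain R]
    (φ : A →* RingAut R)
    {M : Type*} [AddCommGroup M] [Module R M] [Module.Finite R M]
    (ρ : A →* Multiplicative (AddAut M))
    (hsemilinear : ∀ (a : A) (r : R) (m : M), Multiplicative.toAdd (ρ a) (r • m) = (φ a r) • (Multiplicative.toAdd (ρ a) m))
    (horbit : ∀ I : Ideal R, I.IsMaximal →
      {J : Ideal R | ∃ a : A, J = I.map (φ a : R →+* R)}.Infinite) :
    Submodule.torsion R M = ⊥ ∧ Module.Projective R M :=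
  torsion_eq_bot_of_no_finite_orbit_general φ ρ hsemilinear horbit
end
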